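/- Let k ≥ 2 and let d : ℤ^{2k} → ℤ⁵ be the linear map sending the first standard basis vector to f₁ + f₄, the second to f₂ + f₅, the basis vectors e₃,…,e_{k+1} each to f₃ + f₄, and the basis vectors e_{k+2},…,e_{2k} each to f₃ + f₅ (where f₁,…,f₅ is the standard basis of ℤ⁵). Then the image of d is free of rank 4 and the kernel of d is free of rank 2k − 4. -/

import Mathlib

/-!
The columns of `D` take only the four values `f₁ + f₄`, `f₂ + f₅`, `f₃ + f₄`, `f₃ + f₅`, and
since `k ≥ 2` each of them occurs. These four vectors are linearly independent, so the image of
`D`, the span of its columns, is free of rank 4; rank–nullity over `ℤ` then gives rank `2k - 4`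
for the kernel. Both are submodules of finite free `ℤ`-modules, hence free, so their ranks
determine them up to isomorphism.
-/

open Module LinearMap

universe u

theorem LinearMap.finrank_range_add_finrank_ker_of_hasRankNullity {R N : Type*} {M : Type u}
    [Ring R] [StrongRankCondition R] [HasRankNullity.{u} R] [AddCommGroup M] [Module R M]
    [AddCommGroup N] [Module R N] [Module.Finite R M] (f : M →ₗ[R] N) :
    finrank R (range f) + finrank R (ker f) = finrank R M := by
  rw [← f.quotKerEquivRange.finrank_eq]
  exact (ker f).finrank_quotient_add_finrank

def dColumn : Fin 4 → Fin 5 → ℤ :=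
  ![![1, 0, 0, 1, 0], ![0, 1, 0, 0, 1], ![0, 0, 1, 1, 0], ![0, 0, 1, 0, 1]]

def columnType (k : ℕ) (j : Fin (2 * k)) : Fin 4 :=
  if (j : ℕ) = 0 then 0 else if (j : ℕ) = 1 then 1 else if (j : ℕ) ≤ k then 2 else 3

theorem linearIndependent_dColumn : LinearIndependent ℤ dColumn := by
  rw [Fintype.linearIndependent_iff]
  intro g hg
  have hg0 : g 0 = 0 := by simpa [Fin.sum_univ_four, dColumn] using congrFun hg 0
  have hg1 : g 1 = 0 := by simpa [Fin.sum_univ_four, dColumn] using congrFun hg 1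
  have hg2 : g 2 = 0 := by simpa [Fin.sum_univ_four, dColumn, hg0] using congrFun hg 3
  have hg3 : g 3 = 0 := by simpa [Fin.sum_univ_four, dColumn, hg1] using congrFun hg 4
  intro i
  fin_cases i <;> assumption

theorem columnType_surjective {k : ℕ} (hk : 2 ≤ k) : Function.Surjective (columnType k) := by
  intro a
  fin_cases a
  · exact ⟨⟨0, by omega⟩, by simp [columnType]⟩
  · exact ⟨⟨1, by omega⟩, by simp [columnType]⟩
  · exact ⟨⟨2, by omega⟩, by simp [columnType, hk]⟩
  · exact ⟨⟨k + 1, by omega⟩, by simp [columnType, show k ≠ 0 by omega]⟩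

theorem col_eq_dColumn_comp_columnType {k : ℕ} {D : Matrix (Fin 5) (Fin (2 * k)) ℤ}
    (hD : ∀ i j, D i j =
      if (j : ℕ) = 0 then (if (i : ℕ) = 0 ∨ (i : ℕ) = 3 then 1 else 0)
      else if (j : ℕ) = 1 then (if (i : ℕ) = 1 ∨ (i : ℕ) = 4 then 1 else 0)
      else if (j : ℕ) ≤ k then (if (i : ℕ) = 2 ∨ (i : ℕ) = 3 then 1 else 0)
      else (if (i : ℕ) = 2 ∨ (i : ℕ) = 4 then 1 else 0)) :
    D.col = dColumn ∘ columnType k := by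
  ext j i
  rw [Matrix.col_apply, hD, Function.comp_apply, columnType]
  revert i
  split_ifs <;> decide

/-- For k ≥ 2, the map d : ℤ^{2k} → ℤ⁵ sending e₁ ↦ f₁+f₄, e₂ ↦ f₂+f₅,
e₃,…,e_{k+1} ↦ f₃+f₄ and e_{k+2},…,e_{2k} ↦ f₃+f₅ has image free of rank 4 and
kernel free of rank 2k − 4.  (Columns are indexed by `Fin (2*k)` with `j = 0`
corresponding to e₁, and rows by `Fin 5` with `i = 0` corresponding to f₁.) -/
theorem stmt5 (k : ℕ) (hk : 2 ≤ k) (D : Matrix (Fin 5) (Fin (2 * k)) ℤ)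
    (hD : ∀ i j, D i j =
      if (j : ℕ) = 0 then (if (i : ℕ) = 0 ∨ (i : ℕ) = 3 then 1 else 0)
      else if (j : ℕ) = 1 then (if (i : ℕ) = 1 ∨ (i : ℕ) = 4 then 1 else 0)
      else if (j : ℕ) ≤ k then (if (i : ℕ) = 2 ∨ (i : ℕ) = 3 then 1 else 0)
      else (if (i : ℕ) = 2 ∨ (i : ℕ) = 4 then 1 else 0)) :
    Nonempty (↥(LinearMap.range D.mulVecLin) ≃ₗ[ℤ] (Fin 4 → ℤ)) ∧
      Nonempty (↥(LinearMap.ker D.mulVecLin) ≃ₗ[ℤ] (Fin (2 * k - 4) → ℤ)) := by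
  have hcols : Set.range D.col = Set.range dColumn := by
    rw [col_eq_dColumn_comp_columnType hD, (columnType_surjective hk).range_comp]
  have hrange : finrank ℤ (range D.mulVecLin) = 4 := by
    rw [Matrix.range_mulVecLin, hcols, finrank_span_eq_card linearIndependent_dColumn,
      Fintype.card_fin]
  have hker : finrank ℤ (ker D.mulVecLin) = 2 * k - 4 := by
    have := D.mulVecLin.finrank_range_add_finrank_ker_of_hasRankNullity
    rw [hrange, finrank_fin_fun] at this
    omega
  exact ⟨FiniteDimensional.nonempty_linearEquiv_of_finrank_eq (by rw [hrange, finrank_fin_fun]),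
    FiniteDimensional.nonempty_linearEquiv_of_finrank_eq (by rw [hker, finrank_fin_fun])⟩
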